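/- Let n ≥ 3 and let P be the n-partite no-signalling box defined by P(a⃗|x⃗) = 1/2^{n−1} if ⊕ᵢaᵢ = ⊕_{i<j} xᵢxⱼ and 0 otherwise, with all aᵢ,xᵢ ∈ {0,1}. Then the symmetric Bell expression I_sym = ∑_{i<j} I^{ij}_{0⃗|0⃗} − C(n−1,2)·P(0⃗|0⃗) evaluates to (n−1)/2^{n−1} > 0 on P. -/

import Mathlib

open Finset

noncomputable section

/-- The all-zero outcome/input string. -/
def zvec (n : ℕ) : Fin n → Fin 2 := fun _ => 0

/-- The string which is zero except at positions `i` (value `u`) and `j` (value `v`). -/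
def upd2 (n : ℕ) (i j : Fin n) (u v : Fin 2) : Fin n → Fin 2 :=
  Function.update (Function.update (zvec n) i u) j v

/-- The lifted CHSH-variant `I^{ij}_{0⃗|0⃗}` on parties `i, j`, all other parties having
input and outcome fixed to `0`. -/
def liftedCHSH (n : ℕ) (P : (Fin n → Fin 2) → (Fin n → Fin 2) → ℝ) (i j : Fin n) : ℝ :=
  P (upd2 n i j 0 0) (upd2 n i j 0 0) - P (upd2 n i j 1 0) (upd2 n i j 1 0)
    - P (upd2 n i j 0 1) (upd2 n i j 0 1) - P (upd2 n i j 0 0) (upd2 n i j 1 1)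

/-- The symmetric Bell expression `I_sym = ∑_{i<j} I^{ij}_{0⃗|0⃗} − C(n−1,2)·P(0⃗|0⃗)`. -/
def Isym (n : ℕ) (P : (Fin n → Fin 2) → (Fin n → Fin 2) → ℝ) : ℝ :=
  (∑ i, ∑ j ∈ univ.filter (fun j => i < j), liftedCHSH n P i j)
    - ((n - 1).choose 2 : ℝ) * P (zvec n) (zvec n)

/-- The `n`-partite no-signalling box `P(a⃗|x⃗) = 1/2^{n−1}` if `⊕ᵢaᵢ = ⊕_{i<j} xᵢxⱼ`,
and `0` otherwise. -/
def NSbox (n : ℕ) : (Fin n → Fin 2) → (Fin n → Fin 2) → ℝ := fun a x =>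
  if (∑ i, (a i).val) % 2
      = (∑ i, ∑ j ∈ univ.filter (fun j => i < j), (x i).val * (x j).val) % 2
  then 1 / 2 ^ (n - 1) else 0

/-! On each two-party slice `upd2 n i j` the box only sees `u + v` against `u' * v'` modulo 2,
so of the four terms of `I^{ij}_{0⃗|0⃗}` only `P(0⃗|0⃗) = 1/2^{n-1}` survives. Summing over the
`C(n,2)` pairs and subtracting `C(n-1,2)·P(0⃗|0⃗)` leaves `(n-1)/2^{n-1}`, by Pascal's rule. -/

section upd2

variable {n : ℕ} {i j : Fin n}

lemma upd2_apply_left (hij : i ≠ j) (u v : Fin 2) : upd2 n i j u v i = u := by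
  simp [upd2, hij]

lemma upd2_apply_right (u v : Fin 2) : upd2 n i j u v j = v := by
  simp [upd2]

lemma upd2_apply_of_ne {k : Fin n} (hki : k ≠ i) (hkj : k ≠ j) (u v : Fin 2) :
    upd2 n i j u v k = 0 := by
  simp [upd2, hki, hkj, zvec]

lemma sum_val_upd2 (hij : i ≠ j) (u v : Fin 2) :
    ∑ k, (upd2 n i j u v k).val = u.val + v.val := by
  rw [Finset.sum_eq_add_of_mem i j (mem_univ _) (mem_univ _) hij
    (fun k _ hk => by simp [upd2_apply_of_ne hk.1 hk.2]), upd2_apply_left hij, upd2_apply_right]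

lemma sum_pairs_val_mul_upd2 (hij : i < j) (u v : Fin 2) :
    ∑ p, ∑ q ∈ univ.filter (fun q => p < q), (upd2 n i j u v p).val * (upd2 n i j u v q).val
      = u.val * v.val := by
  rw [Finset.sum_eq_single_of_mem i (mem_univ _)]
  · rw [Finset.sum_eq_single_of_mem j (by simp [hij])]
    · rw [upd2_apply_left hij.ne, upd2_apply_right]
    · intro q hq hqj
      simp [upd2_apply_of_ne (mem_filter.mp hq).2.ne' hqj]
  · intro p _ hpi
    refine Finset.sum_eq_zero fun q hq => ?_
    have hpq : p < q := (mem_filter.mp hq).2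
    by_cases hpj : p = j
    · subst hpj
      simp [upd2_apply_of_ne (hij.trans hpq).ne' hpq.ne']
    · simp [upd2_apply_of_ne hpi hpj]

lemma NSbox_upd2 (hij : i < j) (u v u' v' : Fin 2) :
    NSbox n (upd2 n i j u v) (upd2 n i j u' v')
      = if (u.val + v.val) % 2 = (u'.val * v'.val) % 2 then 1 / 2 ^ (n - 1) else 0 := by
  rw [NSbox, sum_val_upd2 hij.ne, sum_pairs_val_mul_upd2 hij]

end upd2

lemma upd2_zero_zero (n : ℕ) (i j : Fin n) : upd2 n i j 0 0 = zvec n := by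
  ext k
  simp [upd2, zvec, Function.update_apply]

lemma liftedCHSH_NSbox {n : ℕ} {i j : Fin n} (hij : i < j) :
    liftedCHSH n (NSbox n) i j = NSbox n (zvec n) (zvec n) := by
  rw [liftedCHSH, ← upd2_zero_zero n i j]
  simp [NSbox_upd2 hij]

lemma sum_card_filter_lt (n : ℕ) :
    ∑ i : Fin n, (univ.filter (fun j => i < j)).card = n.choose 2 := by
  simp only [Finset.filter_lt_eq_Ioi, Fin.card_Ioi]
  rw [Fin.sum_univ_eq_sum_range (fun i => n - 1 - i) n,
    Finset.sum_range_reflect (fun j => j) n, Finset.sum_range_id, Nat.choose_two_right]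

lemma Isym_eq_of_liftedCHSH_eq {n : ℕ} (hn : 1 ≤ n) (P : (Fin n → Fin 2) → (Fin n → Fin 2) → ℝ)
    (hP : ∀ i j, i < j → liftedCHSH n P i j = P (zvec n) (zvec n)) :
    Isym n P = ((n : ℝ) - 1) * P (zvec n) (zvec n) := by
  have hrow (i : Fin n) : ∑ j ∈ univ.filter (fun j => i < j), liftedCHSH n P i j
      = (univ.filter (fun j => i < j)).card * P (zvec n) (zvec n) := by
    rw [Finset.sum_congr rfl fun j hj => hP i j (mem_filter.mp hj).2, sum_const, nsmul_eq_mul]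
  obtain ⟨m, rfl⟩ : ∃ m, n = m + 1 := ⟨n - 1, by omega⟩
  rw [Isym, Finset.sum_congr rfl fun i _ => hrow i, ← sum_mul, ← Nat.cast_sum,
    sum_card_filter_lt, Nat.choose_succ_succ', Nat.choose_one_right]
  push_cast
  ring

theorem stmt7 (n : ℕ) (hn : 3 ≤ n) :
    Isym n (NSbox n) = ((n : ℝ) - 1) / 2 ^ (n - 1) ∧ 0 < Isym n (NSbox n) := by
  have hvalue : Isym n (NSbox n) = ((n : ℝ) - 1) / 2 ^ (n - 1) := by
    rw [Isym_eq_of_liftedCHSH_eq (by omega) _ fun i j => liftedCHSH_NSbox]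
    simp [NSbox, zvec, div_eq_mul_inv]
  refine ⟨hvalue, hvalue ▸ div_pos ?_ (by positivity)⟩
  have : (3 : ℝ) ≤ n := by exact_mod_cast hn
  linarith

end
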